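/- arXiv:1605.05468 — 2 statements merged into one kernel-verified Lean document; each statement's English description precedes it below -/
import Mathlib

section
/- Let p > 1 be a real number. There exists C > 0 depending only on p such that for all a ≥ 0 and b₁, b₂ with a + b₁ ≥ 0 and a + b₂ ≥ 0: |(a+b₁)^p - (a+b₂)^p - p·a^{p-1}·(b₁-b₂)| ≤ C·(|b₁|^{p-1} + |b₂|^{p-1})·|b₁-b₂| when p ≤ 2, and ≤ C·(a^{p-2}(|b₁|+|b₂|) + |b₁|^{p-1} + |b₂|^{p-1})·|b₁-b₂| when p > 2. -/
/-!
By the mean value inequality applied to `t ↦ (a + t) ^ p - p a ^ (p - 1) t` on the segment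
between `b₂` and `b₁`, it suffices to bound `|(a + t) ^ (p - 1) - a ^ (p - 1)|` for
`|t| ≤ max |b₁| |b₂|`. For `p ≤ 2` the exponent `p - 1` lies in `(0, 1]` and `x ↦ x ^ (p - 1)`
is `(p - 1)`-Hölder, giving `|t| ^ (p - 1)`. For `p > 2` a second mean value estimate gives
`(p - 1) (a + |t|) ^ (p - 2) |t|`, and
`(a + |t|) ^ (p - 2) ≤ 2 ^ (p - 2) (a ^ (p - 2) + |t| ^ (p - 2))`.
-/

open Real Set

lemma abs_sub_sub_mul_sub_le_of_hasDerivAt {f f' : ℝ → ℝ} {c M x y : ℝ}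
    (hf : ∀ t ∈ uIcc y x, HasDerivAt f (f' t) t) (hM : ∀ t ∈ uIcc y x, |f' t - c| ≤ M) :
    |f x - f y - c * (x - y)| ≤ M * |x - y| := by
  have hg : ∀ t ∈ uIcc y x,
      HasDerivWithinAt (fun s => f s - c * s) (f' t - c) (uIcc y x) t := fun t ht =>
    (((hf t ht).sub ((hasDerivAt_id' t).const_mul c)).congr_deriv
      (by rw [mul_one])).hasDerivWithinAt
  have := (convex_uIcc y x).norm_image_sub_le_of_norm_hasDerivWithin_le hg hM
    left_mem_uIcc right_mem_uIcc
  simp only [Real.norm_eq_abs] at this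
  convert this using 2
  ring

lemma abs_rpow_sub_rpow_le_abs_sub_rpow {u v q : ℝ} (hu : 0 ≤ u) (hv : 0 ≤ v) (hq₀ : 0 ≤ q)
    (hq₁ : q ≤ 1) : |u ^ q - v ^ q| ≤ |u - v| ^ q := by
  wlog h : v ≤ u generalizing u v
  · rw [abs_sub_comm, abs_sub_comm u]; exact this hv hu (le_of_not_ge h)
  have hsub : u ^ q ≤ (u - v) ^ q + v ^ q := by
    simpa using rpow_add_le_add_rpow (sub_nonneg.2 h) hv hq₀ hq₁
  rw [abs_of_nonneg (sub_nonneg.2 (rpow_le_rpow hv h hq₀)), abs_of_nonneg (sub_nonneg.2 h)]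
  linarith

lemma rpow_max_le_add_rpow {x y r : ℝ} (hx : 0 ≤ x) (hy : 0 ≤ y) (hr : 0 ≤ r) :
    max x y ^ r ≤ x ^ r + y ^ r := by
  rw [rpow_max hx hy hr]; exact max_le_add_of_nonneg (by positivity) (by positivity)

lemma add_rpow_le_two_rpow_mul_add_rpow {x y r : ℝ} (hx : 0 ≤ x) (hy : 0 ≤ y) (hr : 0 ≤ r) :
    (x + y) ^ r ≤ 2 ^ r * (x ^ r + y ^ r) :=
  calc (x + y) ^ r ≤ (2 * max x y) ^ r := by
        gcongr; linarith [le_max_left x y, le_max_right x y]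
    _ = 2 ^ r * max x y ^ r := mul_rpow zero_le_two (by positivity)
    _ ≤ 2 ^ r * (x ^ r + y ^ r) := by gcongr; exact rpow_max_le_add_rpow hx hy hr

lemma abs_le_max_abs_abs_of_mem_uIcc {x y t : ℝ} (ht : t ∈ uIcc x y) : |t| ≤ max |x| |y| := by
  rcases le_total x y with h | h
  · rw [uIcc_of_le h] at ht; exact abs_le_max_abs_abs ht.1 ht.2
  · rw [uIcc_of_ge h] at ht; rw [max_comm]; exact abs_le_max_abs_abs ht.1 ht.2

lemma add_nonneg_of_mem_uIcc {a x y t : ℝ} (hx : 0 ≤ a + x) (hy : 0 ≤ a + y)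
    (ht : t ∈ uIcc x y) : 0 ≤ a + t := by
  rcases mem_uIcc.1 ht with h | h <;> linarith [h.1]

lemma hasDerivAt_add_rpow {q : ℝ} (hq : 1 ≤ q) (a t : ℝ) :
    HasDerivAt (fun s => (a + s) ^ q) (q * (a + t) ^ (q - 1)) t := by
  simpa [Function.comp_def] using
    (hasDerivAt_rpow_const (x := a + t) (Or.inr hq)).comp t ((hasDerivAt_id' t).const_add a)

lemma abs_add_rpow_sub_rpow_le {q a t : ℝ} (hq : 1 ≤ q) (ha : 0 ≤ a) (ht : 0 ≤ a + t) :
    |(a + t) ^ q - a ^ q| ≤ q * (a + |t|) ^ (q - 1) * |t| := by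
  have hbound : ∀ s ∈ uIcc 0 t, |q * (a + s) ^ (q - 1) - 0| ≤ q * (a + |t|) ^ (q - 1) := by
    intro s hs
    have hs₀ : 0 ≤ a + s := add_nonneg_of_mem_uIcc (by simpa using ha) ht hs
    have hst : s ≤ |t| := (le_abs_self s).trans <| by
      simpa using abs_le_max_abs_abs_of_mem_uIcc hs
    rw [sub_zero, abs_of_nonneg (by positivity)]
    gcongr
  simpa using
    abs_sub_sub_mul_sub_le_of_hasDerivAt (fun s _ => hasDerivAt_add_rpow hq a s) hbound

lemma abs_add_rpow_sub_add_rpow_sub_le {p a b₁ b₂ M : ℝ} (hp : 1 ≤ p) (hb₁ : 0 ≤ a + b₁)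
    (hb₂ : 0 ≤ a + b₂)
    (hM : ∀ t, 0 ≤ a + t → |t| ≤ max |b₁| |b₂| → |(a + t) ^ (p - 1) - a ^ (p - 1)| ≤ M) :
    |(a + b₁) ^ p - (a + b₂) ^ p - p * a ^ (p - 1) * (b₁ - b₂)| ≤ p * M * |b₁ - b₂| := by
  refine abs_sub_sub_mul_sub_le_of_hasDerivAt (fun t _ => hasDerivAt_add_rpow hp a t) ?_
  intro t ht
  rw [← mul_sub, abs_mul, abs_of_nonneg (by linarith)]
  gcongr
  exact hM t (add_nonneg_of_mem_uIcc hb₂ hb₁ ht)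
    ((abs_le_max_abs_abs_of_mem_uIcc ht).trans_eq (max_comm _ _))

lemma abs_add_rpow_sub_add_rpow_sub_le_of_le_two {p a b₁ b₂ : ℝ} (hp₁ : 1 ≤ p) (hp₂ : p ≤ 2)
    (ha : 0 ≤ a) (hb₁ : 0 ≤ a + b₁) (hb₂ : 0 ≤ a + b₂) :
    |(a + b₁) ^ p - (a + b₂) ^ p - p * a ^ (p - 1) * (b₁ - b₂)| ≤
      p * (|b₁| ^ (p - 1) + |b₂| ^ (p - 1)) * |b₁ - b₂| := by
  refine abs_add_rpow_sub_add_rpow_sub_le hp₁ hb₁ hb₂ fun t ht htm => ?_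
  calc |(a + t) ^ (p - 1) - a ^ (p - 1)| ≤ |t| ^ (p - 1) := by
        simpa using abs_rpow_sub_rpow_le_abs_sub_rpow ht ha (by linarith) (by linarith)
    _ ≤ max |b₁| |b₂| ^ (p - 1) := by gcongr
    _ ≤ |b₁| ^ (p - 1) + |b₂| ^ (p - 1) :=
        rpow_max_le_add_rpow (abs_nonneg _) (abs_nonneg _) (by linarith)

lemma abs_add_rpow_sub_add_rpow_sub_le_of_two_le {p a b₁ b₂ : ℝ} (hp : 2 ≤ p)
    (ha : 0 ≤ a) (hb₁ : 0 ≤ a + b₁) (hb₂ : 0 ≤ a + b₂) :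
    |(a + b₁) ^ p - (a + b₂) ^ p - p * a ^ (p - 1) * (b₁ - b₂)| ≤
      p * ((p - 1) * 2 ^ (p - 2) *
        (a ^ (p - 2) * (|b₁| + |b₂|) + |b₁| ^ (p - 1) + |b₂| ^ (p - 1))) * |b₁ - b₂| := by
  refine abs_add_rpow_sub_add_rpow_sub_le (by linarith) hb₁ hb₂ fun t ht htm => ?_
  set m := max |b₁| |b₂|
  have hm : 0 ≤ m := (abs_nonneg _).trans (le_max_left _ _)
  have hm_le : m ≤ |b₁| + |b₂| := max_le_add_of_nonneg (abs_nonneg _) (abs_nonneg _)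
  have hp₁ : 0 ≤ p - 1 := by linarith
  have hm_mul : m ^ (p - 2) * m = m ^ (p - 1) := by
    rw [← rpow_add_one' hm (by linarith)]; ring_nf
  calc |(a + t) ^ (p - 1) - a ^ (p - 1)| ≤ (p - 1) * (a + |t|) ^ (p - 1 - 1) * |t| :=
        abs_add_rpow_sub_rpow_le (by linarith) ha ht
    _ ≤ (p - 1) * (a + m) ^ (p - 2) * m := by
        rw [show p - 1 - 1 = p - 2 by ring]; gcongr
    _ ≤ (p - 1) * (2 ^ (p - 2) * (a ^ (p - 2) + m ^ (p - 2))) * m := by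
        gcongr; exact add_rpow_le_two_rpow_mul_add_rpow ha hm (by linarith)
    _ = (p - 1) * 2 ^ (p - 2) * (a ^ (p - 2) * m + m ^ (p - 1)) := by rw [← hm_mul]; ring
    _ ≤ (p - 1) * 2 ^ (p - 2) *
          (a ^ (p - 2) * (|b₁| + |b₂|) + |b₁| ^ (p - 1) + |b₂| ^ (p - 1)) := by
        rw [add_assoc]
        gcongr
        exact rpow_max_le_add_rpow (abs_nonneg _) (abs_nonneg _) (by linarith)

/-- Elementary Lipschitz-type estimate for powers `p > 1`:
`|(a+b₁)^p - (a+b₂)^p - p·a^{p-1}·(b₁-b₂)|` is controlled, with a bound depending on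
whether `p ≤ 2` or `p > 2`. -/
theorem stmt_9 (p : ℝ) (hp : 1 < p) :
    ∃ C : ℝ, 0 < C ∧ ∀ a b₁ b₂ : ℝ, 0 ≤ a → 0 ≤ a + b₁ → 0 ≤ a + b₂ →
      ((p ≤ 2 →
        |(a + b₁) ^ p - (a + b₂) ^ p - p * a ^ (p - 1) * (b₁ - b₂)| ≤
          C * (|b₁| ^ (p - 1) + |b₂| ^ (p - 1)) * |b₁ - b₂|) ∧
       (2 < p →
        |(a + b₁) ^ p - (a + b₂) ^ p - p * a ^ (p - 1) * (b₁ - b₂)| ≤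
          C * (a ^ (p - 2) * (|b₁| + |b₂|) + |b₁| ^ (p - 1) + |b₂| ^ (p - 1)) *
            |b₁ - b₂|)) := by
  refine ⟨max p (p * ((p - 1) * 2 ^ (p - 2))), lt_max_of_lt_left (by linarith),
    fun a b₁ b₂ ha hb₁ hb₂ => ⟨fun hp₂ => ?_, fun hp₂ => ?_⟩⟩
  · refine (abs_add_rpow_sub_add_rpow_sub_le_of_le_two hp.le hp₂ ha hb₁ hb₂).trans ?_
    gcongr
    exact le_max_left _ _
  · refine (abs_add_rpow_sub_add_rpow_sub_le_of_two_le hp₂.le ha hb₁ hb₂).trans ?_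
    rw [← mul_assoc]
    gcongr
    exact le_max_right _ _
end

section
/- Let n ≥ 3 and let G : ℝⁿ × ℝⁿ → ℝ be a kernel with 0 ≤ G(x,y) ≤ C₀·|x-y|^{2-n}. Let δ > 0, W(y) = δ^{(n-2)/2}·(δ² + |y|²)^{1-n/2}, and θ(x) = δ + |x|. Then there exists C = C(n, C₀) > 0 such that for all x₀ with |x₀| ≥ √δ and 0 < δ ≤ 1: ∫_{{|y| ≤ √δ}} G(x₀, y)·W(y)^{(n+2)/(n-2)} dy ≤ C·W(x₀) and ∫_{{|y| ≤ √δ}} G(x₀, y)·W(y) dy ≤ C·δ^{(n-2)/2}·θ(x₀)^{4-n} for n ≥ 5. -/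
/-!
Split the region `{‖y‖ ≤ √δ}` at `‖y‖ = ‖x₀‖ / 2`. On the inner part `‖x₀ - y‖ ≥ ‖x₀‖ / 2`, so the
kernel is at most `(‖x₀‖ / 2) ^ (2 - n)` and only the mass of the weight matters: by scaling,
`∫ W ^ ((n + 2) / (n - 2)) = δ ^ ((n - 2) / 2) ∫ (1 + |u|²) ^ (-(n + 2) / 2)`, while
`∫_{|y| ≤ √δ} W ≤ δ ^ ((n - 2) / 2) ∫_{|y| ≤ √δ} |y| ^ (2 - n) ≲ δ ^ (n / 2)`. On the outer part
the weight is at most its envelope at radius `‖x₀‖ / 2`, and the kernel integrates to `≲ ‖x₀‖²`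
over `B(x₀, 3‖x₀‖)`. Since `δ ≤ √δ ≤ ‖x₀‖`, both contributions are comparable to `W(x₀)`,
resp. to `δ ^ ((n - 2) / 2) θ(x₀) ^ (4 - n)`.
-/

open MeasureTheory Real Metric Set Module

theorem sq_rpow {x : ℝ} (hx : 0 ≤ x) (e : ℝ) : (x ^ 2) ^ e = x ^ (2 * e) := by
  rw [← rpow_natCast_mul hx]; norm_num

theorem measureReal_ball_pos {X : Type*} [PseudoMetricSpace X] [ProperSpace X]
    [MeasurableSpace X] (μ : Measure X) [μ.IsOpenPosMeasure] [IsFiniteMeasureOnCompacts μ]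
    (x : X) {r : ℝ} (hr : 0 < r) : 0 < μ.real (ball x r) :=
  ENNReal.toReal_pos (measure_ball_pos μ x hr).ne' measure_ball_lt_top.ne

section RadialIntegrals

variable {E : Type*} [NormedAddCommGroup E] [NormedSpace ℝ E] [FiniteDimensional ℝ E]
  [MeasurableSpace E] [BorelSpace E] (μ : Measure E) [μ.IsAddHaarMeasure] [Nontrivial E]
  {r s : ℝ}

theorem integral_ball_norm_rpow (hr : 0 ≤ r) (hs : -(finrank ℝ E : ℝ) < s) :
    ∫ x in ball (0 : E) r, ‖x‖ ^ s ∂μ =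
      finrank ℝ E * μ.real (ball 0 1) * r ^ (finrank ℝ E + s) / (finrank ℝ E + s) := by
  have hds : 0 < (finrank ℝ E : ℝ) + s := by linarith
  have hradial : ∫ x in ball (0 : E) r, ‖x‖ ^ s ∂μ =
      ∫ x, (Iio r).indicator (fun ρ : ℝ => ρ ^ s) ‖x‖ ∂μ := by
    rw [← integral_indicator measurableSet_ball]
    congr 1 with x
    simp [indicator]
  have hpolar : ∫ ρ in Ioi (0 : ℝ), ρ ^ (finrank ℝ E - 1) • (Iio r).indicator (· ^ s) ρ =
      ∫ ρ in (0 : ℝ)..r, ρ ^ ((finrank ℝ E : ℝ) + s - 1) := by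
    rw [intervalIntegral.integral_of_le hr, integral_Ioc_eq_integral_Ioo,
      ← integral_indicator measurableSet_Ioo, ← integral_indicator measurableSet_Ioi]
    congr 1 with ρ
    by_cases h0 : 0 < ρ
    · by_cases h1 : ρ < r
      · have hd1 : 1 ≤ finrank ℝ E := finrank_pos
        simp only [indicator, mem_Ioi, mem_Iio, mem_Ioo, h0, h1, and_self, ↓reduceIte,
          smul_eq_mul, ← rpow_natCast, Nat.cast_sub hd1, Nat.cast_one, ← rpow_add h0]
        ring_nf
      · simp [indicator, h0, h1]
    · simp [indicator, h0]
  rw [hradial, integral_fun_norm_addHaar, hpolar, integral_rpow (Or.inl (by linarith))]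
  simp only [sub_add_cancel, zero_rpow hds.ne', sub_zero, smul_eq_mul, nsmul_eq_mul]
  ring

theorem integral_ball_norm_sub_rpow (z : E) (hr : 0 ≤ r) (hs : -(finrank ℝ E : ℝ) < s) :
    ∫ y in ball z r, ‖z - y‖ ^ s ∂μ =
      finrank ℝ E * μ.real (ball 0 1) * r ^ (finrank ℝ E + s) / (finrank ℝ E + s) := by
  have hpre : (· - z) ⁻¹' ball (0 : E) r = ball z r := by
    ext y; simp [dist_eq_norm]
  rw [← integral_ball_norm_rpow μ hr hs, ← hpre,
    ← (measurePreserving_sub_right μ z).setIntegral_preimage_emb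
      (Homeomorph.subRight z).measurableEmbedding (‖·‖ ^ s)]
  simp_rw [norm_sub_rev z]

theorem integrableOn_ball_norm_sub_rpow (z : E) (hr : 0 < r) (hs : -(finrank ℝ E : ℝ) < s) :
    IntegrableOn (fun y => ‖z - y‖ ^ s) (ball z r) μ := by
  have := measureReal_ball_pos μ (0 : E) one_pos
  have : (0 : ℝ) < finrank ℝ E := Nat.cast_pos.2 finrank_pos
  have : (0 : ℝ) < finrank ℝ E + s := by linarith
  -- a function that is not integrable has integral `0`, and this integral is positive
  refine .of_integral_ne_zero ?_
  rw [integral_ball_norm_sub_rpow μ z hr.le hs]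
  positivity

theorem setIntegral_norm_sub_rpow_two_sub_le {S : Set E} {z : E} {R : ℝ} (hS : S ⊆ ball z R)
    (hR : 0 < R) :
    ∫ y in S, ‖z - y‖ ^ (2 - (finrank ℝ E : ℝ)) ∂μ ≤
      finrank ℝ E * μ.real (ball 0 1) * R ^ 2 / 2 := by
  have hs : -(finrank ℝ E : ℝ) < 2 - finrank ℝ E := by linarith
  calc ∫ y in S, ‖z - y‖ ^ (2 - (finrank ℝ E : ℝ)) ∂μ
      ≤ ∫ y in ball z R, ‖z - y‖ ^ (2 - (finrank ℝ E : ℝ)) ∂μ :=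
        setIntegral_mono_set (integrableOn_ball_norm_sub_rpow μ z hR hs)
          (.of_forall fun y => by positivity) hS.eventuallyLE
    _ = finrank ℝ E * μ.real (ball 0 1) * R ^ 2 / 2 := by
        rw [integral_ball_norm_sub_rpow μ z hR.le hs,
          show (finrank ℝ E : ℝ) + (2 - finrank ℝ E) = 2 by ring, rpow_two]

end RadialIntegrals

section Bubble

variable {E : Type*} [NormedAddCommGroup E]

noncomputable def bubble (n δ : ℝ) (y : E) : ℝ :=
  δ ^ ((n - 2) / 2) * (δ ^ 2 + ‖y‖ ^ 2) ^ (1 - n / 2)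

theorem bubble_nonneg {n δ : ℝ} (hδ : 0 ≤ δ) (y : E) : 0 ≤ bubble n δ y := by
  unfold bubble; positivity

theorem bubble_one (n : ℝ) (y : E) : bubble n 1 y = (1 + ‖y‖ ^ 2) ^ (1 - n / 2) := by
  simp [bubble]

theorem bubble_le_of_le_norm {n δ ρ : ℝ} (hn : 2 ≤ n) (hδ : 0 ≤ δ) (hρ : 0 < ρ) {y : E}
    (hy : ρ ≤ ‖y‖) : bubble n δ y ≤ δ ^ ((n - 2) / 2) * ρ ^ (2 - n) := by
  unfold bubble
  gcongr
  calc (δ ^ 2 + ‖y‖ ^ 2) ^ (1 - n / 2) ≤ (ρ ^ 2) ^ (1 - n / 2) :=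
        rpow_le_rpow_of_nonpos (by positivity) (by nlinarith) (by linarith)
    _ = ρ ^ (2 - n) := by rw [sq_rpow hρ.le]; ring_nf

theorem le_bubble_of_le_norm {n δ : ℝ} (hn : 2 ≤ n) (hδ : 0 < δ) {y : E} (hy : δ ≤ ‖y‖) :
    8 ^ (1 - n / 2) * (δ ^ ((n - 2) / 2) * (‖y‖ / 2) ^ (2 - n)) ≤ bubble n δ y := by
  have hy0 : 0 < ‖y‖ := hδ.trans_le hy
  unfold bubble
  calc 8 ^ (1 - n / 2) * (δ ^ ((n - 2) / 2) * (‖y‖ / 2) ^ (2 - n))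
      = δ ^ ((n - 2) / 2) * (8 * (‖y‖ / 2) ^ 2) ^ (1 - n / 2) := by
        rw [mul_rpow (by norm_num) (by positivity), sq_rpow (by positivity)]; ring_nf
    _ ≤ _ := mul_le_mul_of_nonneg_left
        (rpow_le_rpow_of_nonpos (by positivity) (by nlinarith) (by linarith)) (by positivity)

theorem continuous_bubble (n : ℝ) {δ : ℝ} (hδ : 0 < δ) : Continuous (bubble n δ : E → ℝ) :=
  continuous_const.mul ((continuous_const.add (continuous_norm.pow 2)).rpow_const
    fun _ => Or.inl (add_pos_of_pos_of_nonneg (pow_pos hδ 2) (sq_nonneg _)).ne')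

theorem bubble_eq_smul [NormedSpace ℝ E] {n δ : ℝ} (hδ : 0 < δ) (y : E) :
    bubble n δ y = δ ^ (-((n - 2) / 2)) * bubble n 1 (δ⁻¹ • y) := by
  have hscale : 1 + ‖δ⁻¹ • y‖ ^ 2 = (δ ^ 2)⁻¹ * (δ ^ 2 + ‖y‖ ^ 2) := by
    rw [norm_smul, norm_inv, norm_of_nonneg hδ.le]; field_simp
  rw [bubble_one, hscale, mul_rpow (by positivity) (by positivity), inv_rpow (by positivity),
    sq_rpow hδ.le, bubble, ← mul_assoc, ← rpow_neg hδ.le, ← rpow_add hδ]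
  ring_nf

/-- `δ ^ ((n - 2) / 2) * τ ^ (2 - n)` bounds the bubble outside the ball of radius `τ`
(`bubble_le_of_le_norm`). -/
theorem bubble_bound_rpow_mul_sq_le {n δ τ : ℝ} (hn : 2 < n) (hδ : 0 < δ) (hτ : 0 < τ)
    (hδτ : δ ≤ 2 * τ) :
    (δ ^ ((n - 2) / 2) * τ ^ (2 - n)) ^ ((n + 2) / (n - 2)) * τ ^ 2 ≤
      4 * (δ ^ ((n - 2) / 2) * τ ^ (2 - n)) := by
  have hn2 : n - 2 ≠ 0 := by linarith
  have heq : (δ ^ ((n - 2) / 2) * τ ^ (2 - n)) ^ ((n + 2) / (n - 2)) * τ ^ 2 =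
      δ ^ ((n - 2) / 2) * τ ^ (2 - n) * (δ / τ) ^ 2 := by
    rw [mul_rpow (by positivity) (by positivity), ← rpow_mul hδ.le, ← rpow_mul hτ.le,
      show (n - 2) / 2 * ((n + 2) / (n - 2)) = (n - 2) / 2 + 2 by field_simp; ring,
      show (2 - n) * ((n + 2) / (n - 2)) = 2 - n - 2 - 2 by field_simp; ring,
      rpow_add hδ, rpow_sub hτ, rpow_sub hτ, rpow_two, rpow_two]
    field_simp
  have hratio : (δ / τ) ^ 2 ≤ 4 := by
    rw [div_pow, div_le_iff₀ (by positivity)]; nlinarith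
  rw [heq]
  nlinarith [show 0 ≤ δ ^ ((n - 2) / 2) * τ ^ (2 - n) by positivity]

end Bubble

noncomputable def bubbleMass {E : Type*} [NormedAddCommGroup E] [MeasurableSpace E]
    (μ : Measure E) (n : ℝ) : ℝ :=
  ∫ y, bubble n 1 y ^ ((n + 2) / (n - 2)) ∂μ

theorem bubbleMass_nonneg {E : Type*} [NormedAddCommGroup E] [MeasurableSpace E]
    (μ : Measure E) (n : ℝ) : 0 ≤ bubbleMass μ n :=
  integral_nonneg fun y => rpow_nonneg (bubble_nonneg zero_le_one y) _

section NearFar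

variable {E : Type*} [NormedAddCommGroup E]

theorem norm_sub_rpow_mul_le {x₀ y : E} (hx₀ : x₀ ≠ 0) {s F M : ℝ} (hs : s ≤ 0) (hF : 0 ≤ F)
    (hM : 0 ≤ M) (hFM : ‖x₀‖ / 2 < ‖y‖ → F ≤ M) :
    ‖x₀ - y‖ ^ s * F ≤ (‖x₀‖ / 2) ^ s * F + M * ‖x₀ - y‖ ^ s := by
  by_cases hy : ‖y‖ ≤ ‖x₀‖ / 2
  · have hfar : ‖x₀‖ / 2 ≤ ‖x₀ - y‖ := by linarith [norm_sub_norm_le x₀ y]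
    have hk : ‖x₀ - y‖ ^ s ≤ (‖x₀‖ / 2) ^ s :=
      rpow_le_rpow_of_nonpos (by positivity) hfar hs
    nlinarith [rpow_nonneg (norm_nonneg (x₀ - y)) s]
  · have hnear : (0 : ℝ) ≤ (‖x₀‖ / 2) ^ s := by positivity
    nlinarith [hFM (not_le.1 hy), rpow_nonneg (norm_nonneg (x₀ - y)) s]

theorem setIntegral_mul_le_near_far [MeasurableSpace E] {μ : Measure E} {S : Set E}
    (hS : MeasurableSet S) {x₀ : E} (hx₀ : x₀ ≠ 0) {s C₀ M : ℝ} (hs : s ≤ 0) (hC₀ : 0 ≤ C₀)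
    (hM : 0 ≤ M) {k F : E → ℝ} (hk : ∀ y ∈ S, 0 ≤ k y ∧ k y ≤ C₀ * ‖x₀ - y‖ ^ s)
    (hF : ∀ y ∈ S, 0 ≤ F y) (hFM : ∀ y ∈ S, ‖x₀‖ / 2 < ‖y‖ → F y ≤ M)
    (hFi : IntegrableOn F S μ) (hki : IntegrableOn (fun y => ‖x₀ - y‖ ^ s) S μ) :
    ∫ y in S, k y * F y ∂μ ≤
      C₀ * ((‖x₀‖ / 2) ^ s * ∫ y in S, F y ∂μ + M * ∫ y in S, ‖x₀ - y‖ ^ s ∂μ) := by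
  have hsplit : IntegrableOn (fun y => (‖x₀‖ / 2) ^ s * F y + M * ‖x₀ - y‖ ^ s) S μ :=
    (hFi.const_mul _).add (hki.const_mul _)
  calc ∫ y in S, k y * F y ∂μ
      ≤ ∫ y in S, C₀ * ((‖x₀‖ / 2) ^ s * F y + M * ‖x₀ - y‖ ^ s) ∂μ := by
        refine integral_mono_of_nonneg
          (ae_restrict_of_forall_mem hS fun y hy => mul_nonneg (hk y hy).1 (hF y hy))
          (hsplit.const_mul C₀) (ae_restrict_of_forall_mem hS fun y hy => ?_)
        calc k y * F y ≤ C₀ * ‖x₀ - y‖ ^ s * F y :=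
              mul_le_mul_of_nonneg_right (hk y hy).2 (hF y hy)
          _ = C₀ * (‖x₀ - y‖ ^ s * F y) := mul_assoc _ _ _
          _ ≤ _ := mul_le_mul_of_nonneg_left
              (norm_sub_rpow_mul_le hx₀ hs (hF y hy) hM (hFM y hy)) hC₀
    _ = _ := by
        rw [integral_const_mul, integral_add (hFi.const_mul _) (hki.const_mul _),
          integral_const_mul, integral_const_mul]

end NearFar

theorem closedBall_sqrt_subset_ball {E : Type*} [NormedAddCommGroup E] {δ : ℝ} {x₀ : E}
    (hδ : 0 < δ) (hx₀ : √δ ≤ ‖x₀‖) : closedBall (0 : E) √δ ⊆ ball x₀ (3 * ‖x₀‖) := by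
  intro y hy
  rw [mem_closedBall_zero_iff] at hy
  rw [mem_ball, dist_eq_norm]
  have := sqrt_pos.2 hδ
  linarith [norm_sub_le y x₀]

section GreenEstimates

variable {E : Type*} [NormedAddCommGroup E] [NormedSpace ℝ E] [FiniteDimensional ℝ E]
  [MeasurableSpace E] [BorelSpace E] (μ : Measure E) [μ.IsAddHaarMeasure]

theorem integral_bubble_rpow {n δ : ℝ} (hδ : 0 < δ) (p : ℝ) :
    ∫ y, bubble n δ y ^ p ∂μ =
      δ ^ (finrank ℝ E - (n - 2) / 2 * p) * ∫ y, bubble n 1 y ^ p ∂μ := by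
  simp_rw [bubble_eq_smul hδ, mul_rpow (rpow_nonneg hδ.le _) (bubble_nonneg zero_le_one _)]
  rw [integral_const_mul, Measure.integral_comp_inv_smul_of_nonneg μ (fun y => bubble n 1 y ^ p)
    hδ.le, smul_eq_mul, ← mul_assoc, ← rpow_mul hδ.le, ← rpow_natCast, ← rpow_add hδ]
  ring_nf

theorem integrable_bubble_rpow {n δ p : ℝ} (hδ : 0 < δ) (hp : finrank ℝ E < (n - 2) * p) :
    Integrable (fun y => bubble n δ y ^ p) μ := by
  have hone : Integrable (fun y => bubble n 1 y ^ p) μ := by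
    refine (integrable_rpow_neg_one_add_norm_sq hp).congr (.of_forall fun y => ?_)
    dsimp only
    rw [bubble_one, ← rpow_mul (by positivity)]
    ring_nf
  simp_rw [bubble_eq_smul hδ, mul_rpow (rpow_nonneg hδ.le _) (bubble_nonneg zero_le_one _)]
  exact (hone.comp_smul (inv_ne_zero hδ.ne')).const_mul _

theorem integrable_bubble_critical_rpow (hd : 3 ≤ finrank ℝ E) {δ : ℝ} (hδ : 0 < δ) :
    Integrable (fun y => bubble (finrank ℝ E) δ y ^
      (((finrank ℝ E : ℝ) + 2) / ((finrank ℝ E : ℝ) - 2))) μ := by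
  have hd' : (3 : ℝ) ≤ finrank ℝ E := by exact_mod_cast hd
  refine integrable_bubble_rpow μ hδ ?_
  rw [mul_div_cancel₀ _ (by linarith)]
  linarith

theorem setIntegral_bubble_critical_rpow_le (hd : 3 ≤ finrank ℝ E) {δ : ℝ} (hδ : 0 < δ)
    (S : Set E) :
    ∫ y in S, bubble (finrank ℝ E) δ y ^ (((finrank ℝ E : ℝ) + 2) / ((finrank ℝ E : ℝ) - 2)) ∂μ ≤
      δ ^ (((finrank ℝ E : ℝ) - 2) / 2) * bubbleMass μ (finrank ℝ E) := by
  have hd2 : (finrank ℝ E : ℝ) - 2 ≠ 0 := by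
    have : (3 : ℝ) ≤ finrank ℝ E := by exact_mod_cast hd
    linarith
  refine (setIntegral_le_integral (integrable_bubble_critical_rpow μ hd hδ)
    (.of_forall fun y => rpow_nonneg (bubble_nonneg hδ.le y) _)).trans_eq ?_
  rw [integral_bubble_rpow μ hδ, bubbleMass]
  congr 2
  field_simp
  ring

theorem setIntegral_closedBall_bubble_le (hd : 2 ≤ finrank ℝ E) {δ r : ℝ} (hδ : 0 < δ)
    (hr : 0 < r) :
    ∫ y in closedBall (0 : E) r, bubble (finrank ℝ E) δ y ∂μ ≤
      δ ^ (((finrank ℝ E : ℝ) - 2) / 2) * (2 * finrank ℝ E * μ.real (ball 0 1) * r ^ 2) := by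
  have : Nontrivial E := Module.nontrivial_of_finrank_pos (R := ℝ) (by omega)
  have hd' : (2 : ℝ) ≤ finrank ℝ E := by exact_mod_cast hd
  have hball : closedBall (0 : E) r ⊆ ball 0 (2 * r) := closedBall_subset_ball (by linarith)
  have hkernel :
      IntegrableOn (fun y => ‖(0 : E) - y‖ ^ (2 - (finrank ℝ E : ℝ))) (closedBall 0 r) μ :=
    (integrableOn_ball_norm_sub_rpow μ 0 (by positivity) (by linarith)).mono_set hball
  calc ∫ y in closedBall (0 : E) r, bubble (finrank ℝ E) δ y ∂μ
      ≤ ∫ y in closedBall (0 : E) r,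
          δ ^ (((finrank ℝ E : ℝ) - 2) / 2) * ‖(0 : E) - y‖ ^ (2 - (finrank ℝ E : ℝ)) ∂μ := by
        refine setIntegral_mono_ae_restrict
          ((continuous_bubble _ hδ).continuousOn.integrableOn_compact (isCompact_closedBall 0 r))
          (hkernel.const_mul _) (ae_restrict_of_ae ((μ.ae_ne 0).mono fun y hy => ?_))
        simp only [zero_sub, norm_neg]
        exact bubble_le_of_le_norm hd' hδ.le (norm_pos_iff.2 hy) le_rfl
    _ ≤ δ ^ (((finrank ℝ E : ℝ) - 2) / 2) * (2 * finrank ℝ E * μ.real (ball 0 1) * r ^ 2) := by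
        rw [integral_const_mul]
        gcongr
        refine (setIntegral_norm_sub_rpow_two_sub_le μ hball (by positivity)).trans_eq ?_
        ring

theorem setIntegral_mul_bubble_rpow_le (hd : 3 ≤ finrank ℝ E) {C₀ δ : ℝ} (hC₀ : 0 ≤ C₀)
    (hδ : 0 < δ) (hδ1 : δ ≤ 1) {x₀ : E} (hx₀ : √δ ≤ ‖x₀‖) {k : E → ℝ}
    (hk : ∀ y, 0 ≤ k y ∧ k y ≤ C₀ * ‖x₀ - y‖ ^ (2 - (finrank ℝ E : ℝ))) :
    ∫ y in closedBall 0 √δ,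
        k y * bubble (finrank ℝ E) δ y ^ (((finrank ℝ E : ℝ) + 2) / ((finrank ℝ E : ℝ) - 2)) ∂μ ≤
      C₀ * (bubbleMass μ (finrank ℝ E) + 72 * finrank ℝ E * μ.real (ball 0 1)) *
        (δ ^ (((finrank ℝ E : ℝ) - 2) / 2) * (‖x₀‖ / 2) ^ (2 - (finrank ℝ E : ℝ))) := by
  have : Nontrivial E := Module.nontrivial_of_finrank_pos (R := ℝ) (by omega)
  have hd' : (3 : ℝ) ≤ finrank ℝ E := by exact_mod_cast hd
  set p : ℝ := ((finrank ℝ E : ℝ) + 2) / ((finrank ℝ E : ℝ) - 2)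
  have hp : 0 ≤ p := div_nonneg (by linarith) (by linarith)
  have hδx₀ : δ ≤ ‖x₀‖ := (le_sqrt_self_iff.2 hδ1).trans hx₀
  have hx₀0 : x₀ ≠ 0 := norm_pos_iff.1 (hδ.trans_le hδx₀)
  set τ := ‖x₀‖ / 2 with hτ
  have hτ0 : 0 < τ := by positivity
  set a := δ ^ (((finrank ℝ E : ℝ) - 2) / 2)
  set M := (a * τ ^ (2 - (finrank ℝ E : ℝ))) ^ p
  have hball := closedBall_sqrt_subset_ball hδ hx₀
  have hsplit := setIntegral_mul_le_near_far (μ := μ) measurableSet_closedBall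
    hx₀0 (by linarith) hC₀ (by positivity) (M := M)
    (fun y _ => hk y) (fun y _ => rpow_nonneg (bubble_nonneg hδ.le y) p)
    (fun y _ hy => rpow_le_rpow (bubble_nonneg hδ.le y)
      (bubble_le_of_le_norm (by linarith) hδ.le hτ0 hy.le) hp)
    (integrable_bubble_critical_rpow μ hd hδ).integrableOn
    ((integrableOn_ball_norm_sub_rpow μ x₀ (by positivity) (by linarith)).mono_set hball)
  have hnear := setIntegral_bubble_critical_rpow_le μ hd hδ (closedBall 0 √δ)
  have hfar := setIntegral_norm_sub_rpow_two_sub_le μ hball (by positivity)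
  have hM := bubble_bound_rpow_mul_sq_le (n := (finrank ℝ E : ℝ)) (by linarith) hδ hτ0
    (by linarith)
  set d : ℝ := (finrank ℝ E : ℝ)
  refine hsplit.trans ?_
  calc _ ≤ C₀ * (τ ^ (2 - d) * (a * bubbleMass μ d) +
          M * (d * μ.real (ball 0 1) * (3 * ‖x₀‖) ^ 2 / 2)) := by gcongr
    _ = C₀ * (bubbleMass μ d * (a * τ ^ (2 - d)) + 18 * d * μ.real (ball 0 1) * (M * τ ^ 2)) := by
        rw [hτ]; ring
    _ ≤ C₀ * (bubbleMass μ d * (a * τ ^ (2 - d)) +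
          18 * d * μ.real (ball 0 1) * (4 * (a * τ ^ (2 - d)))) := by gcongr
    _ = _ := by ring

theorem setIntegral_mul_bubble_le (hd : 4 ≤ finrank ℝ E) {C₀ δ : ℝ} (hC₀ : 0 ≤ C₀)
    (hδ : 0 < δ) (hδ1 : δ ≤ 1) {x₀ : E} (hx₀ : √δ ≤ ‖x₀‖) {k : E → ℝ}
    (hk : ∀ y, 0 ≤ k y ∧ k y ≤ C₀ * ‖x₀ - y‖ ^ (2 - (finrank ℝ E : ℝ))) :
    ∫ y in closedBall 0 √δ, k y * bubble (finrank ℝ E) δ y ∂μ ≤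
      26 * C₀ * finrank ℝ E * μ.real (ball 0 1) *
        (δ ^ (((finrank ℝ E : ℝ) - 2) / 2) * (‖x₀‖ / 2) ^ (4 - (finrank ℝ E : ℝ))) := by
  have : Nontrivial E := Module.nontrivial_of_finrank_pos (R := ℝ) (by omega)
  have hd' : (4 : ℝ) ≤ finrank ℝ E := by exact_mod_cast hd
  have hδx₀ : δ ≤ ‖x₀‖ := (le_sqrt_self_iff.2 hδ1).trans hx₀
  have hδx₀2 : δ ≤ ‖x₀‖ ^ 2 := (sqrt_le_iff.1 hx₀).2
  have hx₀0 : x₀ ≠ 0 := norm_pos_iff.1 (hδ.trans_le hδx₀)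
  set τ := ‖x₀‖ / 2 with hτ
  have hτ0 : 0 < τ := by positivity
  set a := δ ^ (((finrank ℝ E : ℝ) - 2) / 2)
  have hball := closedBall_sqrt_subset_ball hδ hx₀
  have hsplit := setIntegral_mul_le_near_far (μ := μ) measurableSet_closedBall
    hx₀0 (by linarith) hC₀ (by positivity)
    (M := a * τ ^ (2 - (finrank ℝ E : ℝ))) (fun y _ => hk y) (fun y _ => bubble_nonneg hδ.le y)
    (fun y _ hy => bubble_le_of_le_norm (by linarith) hδ.le hτ0 hy.le)
    ((continuous_bubble _ hδ).continuousOn.integrableOn_compact (isCompact_closedBall 0 √δ))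
    ((integrableOn_ball_norm_sub_rpow μ x₀ (by positivity) (by linarith)).mono_set hball)
  have hnear := setIntegral_closedBall_bubble_le μ (by omega) hδ (sqrt_pos.2 hδ)
  have hfar := setIntegral_norm_sub_rpow_two_sub_le μ hball (by positivity)
  set d : ℝ := (finrank ℝ E : ℝ)
  have hτ2 : τ ^ (2 - d) * τ ^ 2 = τ ^ (4 - d) := by
    rw [← rpow_two, ← rpow_add hτ0]; ring_nf
  refine hsplit.trans ?_
  calc _ ≤ C₀ * (τ ^ (2 - d) * (a * (2 * d * μ.real (ball 0 1) * √δ ^ 2)) +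
          a * τ ^ (2 - d) * (d * μ.real (ball 0 1) * (3 * ‖x₀‖) ^ 2 / 2)) := by gcongr
    _ = C₀ * d * μ.real (ball 0 1) * (a * τ ^ (2 - d)) * (2 * δ + 18 * τ ^ 2) := by
        rw [sq_sqrt hδ.le, hτ]; ring
    _ ≤ C₀ * d * μ.real (ball 0 1) * (a * τ ^ (2 - d)) * (26 * τ ^ 2) := by
        gcongr
        linarith [show ‖x₀‖ ^ 2 = 4 * τ ^ 2 by rw [hτ]; ring]
    _ = _ := by rw [← hτ2]; ring

theorem exists_setIntegral_green_mul_bubble_rpow_le {n : ℕ} (hd : finrank ℝ E = n)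
    (hn : 3 ≤ n) {C₀ : ℝ} (hC₀ : 0 < C₀) {G : E → E → ℝ}
    (hG : ∀ x y, 0 ≤ G x y ∧ G x y ≤ C₀ * ‖x - y‖ ^ (2 - (n : ℝ))) :
    ∃ C : ℝ, 0 < C ∧ ∀ δ : ℝ, 0 < δ → δ ≤ 1 → ∀ x₀ : E, √δ ≤ ‖x₀‖ →
      ∫ y in {y : E | ‖y‖ ≤ √δ}, G x₀ y * bubble n δ y ^ (((n : ℝ) + 2) / ((n : ℝ) - 2)) ∂μ ≤
        C * bubble n δ x₀ := by
  subst hd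
  have hn' : (3 : ℝ) ≤ finrank ℝ E := by exact_mod_cast hn
  have : Nontrivial E := Module.nontrivial_of_finrank_pos (R := ℝ) (by omega)
  have hV := measureReal_ball_pos μ (0 : E) one_pos
  have hK := bubbleMass_nonneg μ (finrank ℝ E)
  refine ⟨C₀ * (bubbleMass μ (finrank ℝ E) + 72 * finrank ℝ E * μ.real (ball 0 1)) *
    8 ^ ((finrank ℝ E : ℝ) / 2 - 1), by positivity, fun δ hδ hδ1 x₀ hx₀ => ?_⟩
  rw [show {y : E | ‖y‖ ≤ √δ} = closedBall 0 √δ by ext; simp]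
  refine (setIntegral_mul_bubble_rpow_le μ hn hC₀.le hδ hδ1 hx₀ (hG x₀)).trans ?_
  have hW := le_bubble_of_le_norm (n := (finrank ℝ E : ℝ)) (by linarith) hδ
    ((le_sqrt_self_iff.2 hδ1).trans hx₀)
  set d : ℝ := (finrank ℝ E : ℝ)
  have h8 : (8 : ℝ) ^ (d / 2 - 1) * 8 ^ (1 - d / 2) = 1 := by
    rw [← rpow_add (by norm_num)]; norm_num
  calc _ = C₀ * (bubbleMass μ d + 72 * d * μ.real (ball 0 1)) * 8 ^ (d / 2 - 1) *
        (8 ^ (1 - d / 2) * (δ ^ ((d - 2) / 2) * (‖x₀‖ / 2) ^ (2 - d))) := by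
        linear_combination (-(C₀ * (bubbleMass μ d + 72 * d * μ.real (ball 0 1)) *
          (δ ^ ((d - 2) / 2) * (‖x₀‖ / 2) ^ (2 - d)))) * h8
    _ ≤ _ := by gcongr

theorem exists_setIntegral_green_mul_bubble_le {n : ℕ} (hd : finrank ℝ E = n)
    (hn : 4 ≤ n) {C₀ : ℝ} (hC₀ : 0 < C₀) {G : E → E → ℝ}
    (hG : ∀ x y, 0 ≤ G x y ∧ G x y ≤ C₀ * ‖x - y‖ ^ (2 - (n : ℝ))) :
    ∃ C : ℝ, 0 < C ∧ ∀ δ : ℝ, 0 < δ → δ ≤ 1 → ∀ x₀ : E, √δ ≤ ‖x₀‖ →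
      ∫ y in {y : E | ‖y‖ ≤ √δ}, G x₀ y * bubble n δ y ∂μ ≤
        C * δ ^ (((n : ℝ) - 2) / 2) * (δ + ‖x₀‖) ^ (4 - (n : ℝ)) := by
  subst hd
  have hn' : (4 : ℝ) ≤ finrank ℝ E := by exact_mod_cast hn
  have : Nontrivial E := Module.nontrivial_of_finrank_pos (R := ℝ) (by omega)
  have hV := measureReal_ball_pos μ (0 : E) one_pos
  refine ⟨26 * C₀ * finrank ℝ E * μ.real (ball 0 1) * 4 ^ ((finrank ℝ E : ℝ) - 4), by positivity,
    fun δ hδ hδ1 x₀ hx₀ => ?_⟩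
  rw [show {y : E | ‖y‖ ≤ √δ} = closedBall 0 √δ by ext; simp]
  refine (setIntegral_mul_bubble_le μ hn hC₀.le hδ hδ1 hx₀ (hG x₀)).trans ?_
  have hδx₀ : δ ≤ ‖x₀‖ := (le_sqrt_self_iff.2 hδ1).trans hx₀
  set d : ℝ := (finrank ℝ E : ℝ)
  have h4 : (4 : ℝ) ^ (d - 4) * 4 ^ (4 - d) = 1 := by
    rw [← rpow_add (by norm_num)]; norm_num
  have hθ : 4 ^ (4 - d) * (‖x₀‖ / 2) ^ (4 - d) ≤ (δ + ‖x₀‖) ^ (4 - d) := by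
    rw [← mul_rpow (by norm_num) (by positivity)]
    exact rpow_le_rpow_of_nonpos (by linarith) (by linarith) (by linarith)
  calc _ = 26 * C₀ * d * μ.real (ball 0 1) * 4 ^ (d - 4) * δ ^ ((d - 2) / 2) *
        (4 ^ (4 - d) * (‖x₀‖ / 2) ^ (4 - d)) := by
        linear_combination (-(26 * C₀ * d * μ.real (ball 0 1) *
          δ ^ ((d - 2) / 2) * (‖x₀‖ / 2) ^ (4 - d))) * h4
    _ ≤ _ := by gcongr

end GreenEstimates

/-- Green's-function estimates: if `0 ≤ G(x,y) ≤ C₀|x-y|^{2-n}`, `0 < δ ≤ 1`,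
`W(y) = δ^{(n-2)/2}(δ² + |y|²)^{1-n/2}`, `θ(x) = δ + |x|`, then there is
`C = C(n, C₀) > 0` such that for `|x₀| ≥ √δ`:
`∫_{|y| ≤ √δ} G(x₀,y) W(y)^{(n+2)/(n-2)} dy ≤ C·W(x₀)` and, for `n ≥ 5`,
`∫_{|y| ≤ √δ} G(x₀,y) W(y) dy ≤ C·δ^{(n-2)/2} θ(x₀)^{4-n}`. -/
theorem stmt_19 (n : ℕ) (hn : 3 ≤ n) (C₀ : ℝ) (hC₀ : 0 < C₀)
    (G : EuclideanSpace ℝ (Fin n) → EuclideanSpace ℝ (Fin n) → ℝ)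
    (hG : ∀ x y, 0 ≤ G x y ∧ G x y ≤ C₀ * ‖x - y‖ ^ (2 - (n : ℝ))) :
    ∃ C : ℝ, 0 < C ∧ ∀ (δ : ℝ), 0 < δ → δ ≤ 1 →
      ∀ x₀ : EuclideanSpace ℝ (Fin n), Real.sqrt δ ≤ ‖x₀‖ →
        ((∫ y in {y : EuclideanSpace ℝ (Fin n) | ‖y‖ ≤ Real.sqrt δ},
            G x₀ y * (δ ^ (((n : ℝ) - 2) / 2) *
              (δ ^ 2 + ‖y‖ ^ 2) ^ (1 - (n : ℝ) / 2)) ^ (((n : ℝ) + 2) / ((n : ℝ) - 2))) ≤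
          C * (δ ^ (((n : ℝ) - 2) / 2) * (δ ^ 2 + ‖x₀‖ ^ 2) ^ (1 - (n : ℝ) / 2))) ∧
        (5 ≤ n →
          (∫ y in {y : EuclideanSpace ℝ (Fin n) | ‖y‖ ≤ Real.sqrt δ},
              G x₀ y * (δ ^ (((n : ℝ) - 2) / 2) *
                (δ ^ 2 + ‖y‖ ^ 2) ^ (1 - (n : ℝ) / 2))) ≤
            C * δ ^ (((n : ℝ) - 2) / 2) * (δ + ‖x₀‖) ^ (4 - (n : ℝ))) := by
  obtain ⟨C₁, hC₁, h₁⟩ :=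
    exists_setIntegral_green_mul_bubble_rpow_le volume finrank_euclideanSpace_fin hn hC₀ hG
  by_cases hn5 : 5 ≤ n
  · obtain ⟨C₂, -, h₂⟩ :=
      exists_setIntegral_green_mul_bubble_le volume finrank_euclideanSpace_fin (by omega) hC₀ hG
    refine ⟨max C₁ C₂, lt_max_of_lt_left hC₁, fun δ hδ hδ1 x₀ hx₀ => ⟨?_, fun _ => ?_⟩⟩
    · refine (h₁ δ hδ hδ1 x₀ hx₀).trans ?_
      exact mul_le_mul_of_nonneg_right (le_max_left _ _) (bubble_nonneg hδ.le x₀)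
    · refine (h₂ δ hδ hδ1 x₀ hx₀).trans ?_
      gcongr
      exact le_max_right _ _
  · exact ⟨C₁, hC₁, fun δ hδ hδ1 x₀ hx₀ => ⟨h₁ δ hδ hδ1 x₀ hx₀, fun h => absurd h hn5⟩⟩
end
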